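/- Let V ⊆ 𝔽₂ᵏ be a binary code such that the weight of every element of V is divisible by 4, and let m be the number of coordinates in the support of V. If dim V ≥ 4, then m ≥ 8. -/

import Mathlib

/-!
By `w(v + w) = w(v) + w(w) - 2 |supp v ∩ supp w|`, the weights of a doubly even binary code
force `|supp v ∩ supp w|` to be even, i.e. the code is self-orthogonal for the dot product.
Restricting to the support of `V` embeds `V` into `𝔽₂ᵐ`, and a self-orthogonal subspace `W` of
`Kᵐ` satisfies `dim W ≤ dim W^⊥ = m - dim W`, so `2 dim V ≤ m`.
-/

open Module Finset

theorem ZMod.val_add_add_two_mul_val_mul (a b : ZMod 2) :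
    (a + b).val + 2 * (a * b).val = a.val + b.val := by
  decide +revert

section

variable {ι : Type*} [Fintype ι]

theorem hammingNorm_eq_sum_val (x : ι → ZMod 2) :
    hammingNorm x = ∑ i, (x i).val := by
  rw [hammingNorm, card_filter]
  refine sum_congr rfl fun i _ => ?_
  generalize x i = a
  decide +revert

theorem hammingNorm_add_add_two_mul_sum_val_mul (v w : ι → ZMod 2) :
    hammingNorm (v + w) + 2 * ∑ i, (v i * w i).val = hammingNorm v + hammingNorm w := by
  simp only [hammingNorm_eq_sum_val, Pi.add_apply, mul_sum, ← sum_add_distrib,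
    ZMod.val_add_add_two_mul_val_mul]

theorem dotProduct_eq_zero_of_four_dvd_hammingNorm {v w : ι → ZMod 2}
    (hv : 4 ∣ hammingNorm v) (hw : 4 ∣ hammingNorm w) (hvw : 4 ∣ hammingNorm (v + w)) :
    v ⬝ᵥ w = 0 := by
  have hcast : v ⬝ᵥ w = ((∑ i, (v i * w i).val : ℕ) : ZMod 2) := by
    simp only [dotProduct, Nat.cast_sum, ZMod.natCast_zmod_val]
  have := hammingNorm_add_add_two_mul_sum_val_mul v w
  rw [hcast, ZMod.natCast_eq_zero_iff]
  omega

theorem two_mul_finrank_le_card_of_dotProduct_eq_zero {K : Type*} [Field K]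
    (W : Submodule K (ι → K)) (hW : ∀ v ∈ W, ∀ w ∈ W, v ⬝ᵥ w = 0) :
    2 * finrank K W ≤ Fintype.card ι := by
  let B : LinearMap.BilinForm K (ι → K) := dotProductBilin K K
  have hB : B.Nondegenerate := by
    constructor <;> intro x hx
    · exact dotProduct_eq_zero x hx
    · exact dotProduct_eq_zero x fun w => by rw [dotProduct_comm]; exact hx w
  have hle : finrank K W ≤ finrank K (B.orthogonal W) :=
    Submodule.finrank_mono fun w hw v hv => hW v hv w hw
  rw [LinearMap.BilinForm.finrank_orthogonal hB, finrank_fintype_fun_eq_card] at hle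
  have := W.finrank_le
  rw [finrank_fintype_fun_eq_card] at this
  omega

theorem two_mul_finrank_le_card_of_dotProduct_eq_zero_of_support_subset {K : Type*} [Field K]
    (W : Submodule K (ι → K)) (S : Finset ι) (hS : ∀ v ∈ W, ∀ i ∉ S, v i = 0)
    (hW : ∀ v ∈ W, ∀ w ∈ W, v ⬝ᵥ w = 0) :
    2 * finrank K W ≤ #S := by
  let ρ : W →ₗ[K] (S → K) := LinearMap.funLeft K K ((↑) : S → ι) ∘ₗ W.subtype
  have hρ (v w : W) : ρ v ⬝ᵥ ρ w = (v : ι → K) ⬝ᵥ w := by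
    refine (sum_coe_sort S fun i => v.1 i * w.1 i).trans (sum_subset (subset_univ S) ?_)
    intro i _ hi
    rw [hS v v.2 i hi, zero_mul]
  have hinj : Function.Injective ρ := by
    rw [← LinearMap.ker_eq_bot, LinearMap.ker_eq_bot']
    intro v hv
    ext i
    by_cases hi : i ∈ S
    · exact congrFun hv ⟨i, hi⟩
    · exact hS v v.2 i hi
  have := two_mul_finrank_le_card_of_dotProduct_eq_zero (LinearMap.range ρ) <| by
    rintro _ ⟨v, rfl⟩ _ ⟨w, rfl⟩
    rw [hρ]
    exact hW v v.2 w w.2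
  rwa [LinearMap.finrank_range_of_inj hinj, Fintype.card_coe] at this

end

open scoped Classical in
/-- If `V ⊆ 𝔽₂ᵏ` is a binary code all of whose weights are divisible
by `4`, `m` is the number of coordinates in the support of `V`, and `dim V ≥ 4`,
then `m ≥ 8`. -/
theorem doubly_even_code_dim_ge_four_support_ge_eight (k : ℕ)
    (V : Submodule (ZMod 2) (Fin k → ZMod 2))
    (hV : ∀ v ∈ V, 4 ∣ (Finset.univ.filter fun i => v i ≠ 0).card)
    (m : ℕ)
    (hm : m = (Finset.univ.filter fun i => ∃ v ∈ V, v i ≠ 0).card)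
    (hr : 4 ≤ Module.finrank (ZMod 2) V) :
    8 ≤ m := by
  have hself : ∀ v ∈ V, ∀ w ∈ V, v ⬝ᵥ w = 0 := fun v hv w hw =>
    dotProduct_eq_zero_of_four_dvd_hammingNorm (hV v hv) (hV w hw) (hV _ (V.add_mem hv hw))
  have hsupp : ∀ v ∈ V, ∀ i ∉ univ.filter fun i => ∃ v ∈ V, v i ≠ 0, v i = 0 := by
    intro v hv i hi
    by_contra hvi
    exact hi (mem_filter.2 ⟨mem_univ i, v, hv, hvi⟩)
  have := two_mul_finrank_le_card_of_dotProduct_eq_zero_of_support_subset V _ hsupp hself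
  omega
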